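/- arXiv:math/0609794 — 2 statements merged into one kernel-verified Lean document; each statement's English description precedes it below -/
import Mathlib

section
/- Let (X,T) be a distal topological dynamical system (not assumed minimal), let (Y,S) be a minimal topological dynamical system, and let p : X → Y be a factor map. Then p is an open map. -/
open Filter Topology

/-- The `n`-th iterate (`n : ℤ`) of a homeomorphism `T : X → X`. -/
def iterZ {X : Type*} [TopologicalSpace X] (T : X ≃ₜ X) (n : ℤ) : X → X :=
  fun x => (T.toEquiv ^ n) x

section Defs

variable {X : Type*} [TopologicalSpace X]

/-- The set of parallelograms `𝒫`: the closure in `X⁴` of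
`{(x, Tᵐx, Tⁿx, Tᵐ⁺ⁿx) : x ∈ X, m, n ∈ ℤ}`. -/
def Para (T : X ≃ₜ X) : Set (X × X × X × X) :=
  closure {q | ∃ (x : X) (m n : ℤ),
    q = (x, iterZ T m x, iterZ T n x, iterZ T (m + n) x)}

/-- The set of parallelepipeds `𝒬`: the closure in `X⁸ = X⁴ × X⁴` of
`{(x, Tᵐx, Tⁿx, Tᵐ⁺ⁿx, Tᵖx, Tᵐ⁺ᵖx, Tⁿ⁺ᵖx, Tᵐ⁺ⁿ⁺ᵖx) : x ∈ X, m, n, p ∈ ℤ}`. -/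
def Pip (T : X ≃ₜ X) : Set ((X × X × X × X) × (X × X × X × X)) :=
  closure {q | ∃ (x : X) (m n p : ℤ),
    q = ((x, iterZ T m x, iterZ T n x, iterZ T (m + n) x),
         (iterZ T p x, iterZ T (m + p) x, iterZ T (n + p) x, iterZ T (m + n + p) x))}

end Defs

section MetricDefs

variable {X : Type*} [MetricSpace X]

/-- `(X, T)` is transitive: some point has dense orbit `{Tⁿx : n ∈ ℤ}`. -/
def IsTransitive (T : X ≃ₜ X) : Prop :=
  ∃ x : X, Dense (Set.range fun n : ℤ => iterZ T n x)

/-- `(X, T)` is minimal: every point has dense orbit. -/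
def IsMinimal (T : X ≃ₜ X) : Prop :=
  ∀ x : X, Dense (Set.range fun n : ℤ => iterZ T n x)

/-- `(x, y)` is a proximal pair: `inf_{n ∈ ℤ} d(Tⁿx, Tⁿy) = 0`. -/
def ProximalPair (T : X ≃ₜ X) (x y : X) : Prop :=
  ⨅ n : ℤ, dist (iterZ T n x) (iterZ T n y) = 0

/-- `(X, T)` is distal: every pair of distinct points is distal,
i.e. `inf_{n ∈ ℤ} d(Tⁿx, Tⁿy) > 0`. -/
def IsDistal (T : X ≃ₜ X) : Prop :=
  ∀ x y : X, x ≠ y → 0 < ⨅ n : ℤ, dist (iterZ T n x) (iterZ T n y)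

/-- The regionally proximal relation `RP`. -/
def RP (T : X ≃ₜ X) (x y : X) : Prop :=
  ∀ ε > 0, ∃ x' y' : X, ∃ n : ℤ,
    dist x' x < ε ∧ dist y' y < ε ∧ dist (iterZ T n x') (iterZ T n y') < ε

/-- The doubly regionally proximal relation `RP²`. -/
def RP2 (T : X ≃ₜ X) (x y : X) : Prop :=
  ∀ ε > 0, ∃ x' y' : X, ∃ m n : ℤ,
    dist x' x < ε ∧ dist y' y < ε ∧
    dist (iterZ T m x') (iterZ T m y') < ε ∧
    dist (iterZ T n x') (iterZ T n y') < ε ∧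
    dist (iterZ T (m + n) x') (iterZ T (m + n) y') < ε

/-- The strongly doubly regionally proximal relation `RP²ₛ`. -/
def RP2S (T : X ≃ₜ X) (x y : X) : Prop :=
  ∀ ε > 0, ∃ x' y' : X, ∃ m n : ℤ,
    dist x' x < ε ∧ dist y' y < ε ∧
    dist (iterZ T m x') y < ε ∧ dist (iterZ T n x') y < ε ∧
    dist (iterZ T (m + n) x') y < ε ∧
    dist (iterZ T m y') y < ε ∧ dist (iterZ T n y') y < ε ∧
    dist (iterZ T (m + n) y') y < ε

end MetricDefs

lemma iterZ_zero {X : Type*} [TopologicalSpace X] (T : X ≃ₜ X) (x : X) : iterZ T 0 x = x := rfl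

lemma iterZ_add_one {X : Type*} [TopologicalSpace X] (T : X ≃ₜ X) (n : ℤ) (x : X) :
    iterZ T (n + 1) x = iterZ T n (T x) := by
  simp [iterZ, zpow_add_one, Equiv.Perm.mul_apply]

lemma iterZ_sub_one {X : Type*} [TopologicalSpace X] (T : X ≃ₜ X) (n : ℤ) (x : X) :
    iterZ T (n - 1) x = iterZ T n (T.symm x) := by
  simp [iterZ, zpow_sub_one, Equiv.Perm.mul_apply]

lemma iterZ_add {X : Type*} [TopologicalSpace X] (T : X ≃ₜ X) (m n : ℤ) (x : X) :
    iterZ T (m + n) x = iterZ T m (iterZ T n x) := by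
  simp [iterZ, zpow_add, Equiv.Perm.mul_apply]

lemma iterZ_continuous {X : Type*} [TopologicalSpace X] (T : X ≃ₜ X) (n : ℤ) :
    Continuous (iterZ T n) := by
  induction n using Int.induction_on with
  | zero => exact continuous_id
  | succ n ih =>
      have : iterZ T (n + 1 : ℤ) = fun x => iterZ T n (T x) := funext fun x => iterZ_add_one ..
      rw [this]; exact ih.comp T.continuous
  | pred n ih =>
      have : iterZ T (-n - 1 : ℤ) = fun x => iterZ T (-n) (T.symm x) := funext fun x => iterZ_sub_one ..
      rw [this]; exact ih.comp T.continuous_symm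

lemma p_iterZ {X Y : Type*} [TopologicalSpace X] [TopologicalSpace Y]
    (T : X ≃ₜ X) (S : Y ≃ₜ Y) (p : X → Y) (hfac : ∀ x : X, p (T x) = S (p x)) (n : ℤ) (x : X) :
    p (iterZ T n x) = iterZ S n (p x) := by
  induction n using Int.induction_on generalizing x with
  | zero => rfl
  | succ n ih => rw [iterZ_add_one, iterZ_add_one, ih, hfac]
  | pred n ih =>
      rw [iterZ_sub_one, iterZ_sub_one, ih]
      congr 1
      have := hfac (T.symm x)
      rw [T.apply_symm_apply] at this
      rw [this, S.symm_apply_apply]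

/-- Idempotent in a nonempty compact set of function pairs closed under composition. -/
lemma exists_idem_pair {X Y : Type*} [TopologicalSpace X] [TopologicalSpace Y]
    [T2Space X] [T2Space Y]
    (A : Set ((X → X) × (Y → Y))) (hA : IsCompact A) (hne : A.Nonempty)
    (hmul : ∀ q ∈ A, ∀ r ∈ A, ((q.1 ∘ r.1, q.2 ∘ r.2) : (X → X) × (Y → Y)) ∈ A) :
    ∃ u ∈ A, u.1 ∘ u.1 = u.1 ∧ u.2 ∘ u.2 = u.2 := by
  haveI := hne.to_subtype
  letI : Semigroup A :=
    { mul := fun q r => ⟨(q.1.1 ∘ r.1.1, q.1.2 ∘ r.1.2), hmul _ q.2 _ r.2⟩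
      mul_assoc := fun a b c => rfl }
  haveI : CompactSpace A := isCompact_iff_compactSpace.mp hA
  have hc : ∀ r : A, Continuous (· * r) := by
    intro r
    apply Continuous.subtype_mk
    refine Continuous.prodMk ?_ ?_
    · exact continuous_pi fun x =>
        (continuous_apply (r.1.1 x)).comp (continuous_fst.comp continuous_subtype_val)
    · exact continuous_pi fun y =>
        (continuous_apply (r.1.2 y)).comp (continuous_snd.comp continuous_subtype_val)
  obtain ⟨m, hm⟩ := exists_idempotent_of_compact_t2_of_continuous_mul_left hc
  have h' := congrArg Subtype.val hm
  exact ⟨m.1, m.2, congrArg Prod.fst h', congrArg Prod.snd h'⟩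

/-- A factor map from a distal system onto a minimal system is open. -/
theorem stmt8 {X : Type*} [MetricSpace X] [CompactSpace X] [Nonempty X]
    (T : X ≃ₜ X)
    {Y : Type*} [MetricSpace Y] [CompactSpace Y] [Nonempty Y] (S : Y ≃ₜ Y)
    (hX : IsDistal T) (hY : IsMinimal S)
    (p : X → Y) (hp : Continuous p) (hsurj : Function.Surjective p)
    (hfac : ∀ x : X, p (T x) = S (p x)) :
    IsOpenMap p := by
  classical
  set Θ : ℤ → (X → X) × (Y → Y) := fun n => (iterZ T n, iterZ S n) with hΘ
  set F : Set ((X → X) × (Y → Y)) := closure (Set.range Θ) with hF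
  have hFcompact : IsCompact F := isClosed_closure.isCompact
  have hFne : F.Nonempty := ⟨Θ 0, subset_closure ⟨0, rfl⟩⟩
  -- factor relation on F
  have hC : ∀ q ∈ F, ∀ x : X, p (q.1 x) = q.2 (p x) := by
    intro q hq
    have hclosed : IsClosed {q : (X → X) × (Y → Y) | ∀ x, p (q.1 x) = q.2 (p x)} := by
      have : {q : (X → X) × (Y → Y) | ∀ x, p (q.1 x) = q.2 (p x)} =
          ⋂ x : X, {q | p (q.1 x) = q.2 (p x)} := by
        ext q; simp [Set.mem_iInter]
      rw [this]
      exact isClosed_iInter fun x => isClosed_eq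
        (hp.comp ((continuous_apply x).comp continuous_fst))
        ((continuous_apply (p x)).comp continuous_snd)
    have hsub : F ⊆ {q : (X → X) × (Y → Y) | ∀ x, p (q.1 x) = q.2 (p x)} := by
      apply closure_minimal _ hclosed
      rintro _ ⟨n, rfl⟩ x
      exact p_iterZ T S p hfac n x
    exact hsub hq
  -- F is closed under composition
  have hmulF : ∀ q ∈ F, ∀ r ∈ F, ((q.1 ∘ r.1, q.2 ∘ r.2) : (X → X) × (Y → Y)) ∈ F := by
    have step1 : ∀ (n : ℤ), ∀ r ∈ F,
        (((Θ n).1 ∘ r.1, (Θ n).2 ∘ r.2) : (X → X) × (Y → Y)) ∈ F := by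
      intro n r hr
      have hcont : Continuous fun r : (X → X) × (Y → Y) => ((Θ n).1 ∘ r.1, (Θ n).2 ∘ r.2) := by
        refine Continuous.prodMk ?_ ?_
        · exact continuous_pi fun x =>
            (iterZ_continuous T n).comp ((continuous_apply x).comp continuous_fst)
        · exact continuous_pi fun y =>
            (iterZ_continuous S n).comp ((continuous_apply y).comp continuous_snd)
      have hmaps : Set.MapsTo (fun r : (X → X) × (Y → Y) => ((Θ n).1 ∘ r.1, (Θ n).2 ∘ r.2))
          (Set.range Θ) (Set.range Θ) := by
        rintro _ ⟨m, rfl⟩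
        exact ⟨n + m, by
          simp only [hΘ]
          exact Prod.ext (funext fun x => iterZ_add T n m x)
            (funext fun y => iterZ_add S n m y)⟩
      exact hmaps.closure hcont hr
    intro q hq r hr
    have hcont : Continuous fun q : (X → X) × (Y → Y) => (q.1 ∘ r.1, q.2 ∘ r.2) := by
      refine Continuous.prodMk ?_ ?_
      · exact continuous_pi fun x => (continuous_apply (r.1 x)).comp continuous_fst
      · exact continuous_pi fun y => (continuous_apply (r.2 y)).comp continuous_snd
    have hmaps : Set.MapsTo (fun q : (X → X) × (Y → Y) => (q.1 ∘ r.1, q.2 ∘ r.2))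
        (Set.range Θ) F := by
      rintro _ ⟨n, rfl⟩
      exact step1 n r hr
    have hmapsC := hmaps.closure hcont
    rw [closure_closure] at hmapsC
    exact hmapsC hq
  -- distality: approximable pairs are equal
  have hdistal : ∀ a b : X, (∀ ε > (0:ℝ), ∃ n : ℤ, dist (iterZ T n a) (iterZ T n b) < ε) →
      a = b := by
    intro a b H
    by_contra hne
    have h0 := hX a b hne
    obtain ⟨n, hn⟩ := H _ h0
    have hbdd : BddBelow (Set.range fun n : ℤ => dist (iterZ T n a) (iterZ T n b)) :=
      ⟨0, by rintro r ⟨m, rfl⟩; exact dist_nonneg⟩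
    exact absurd (ciInf_le hbdd n) (not_le.mpr hn)
  -- idempotents are the identity
  have hidem : ∀ u ∈ F, u.1 ∘ u.1 = u.1 → u.1 = id ∧ u.2 = id := by
    intro u hu h1
    have hu1 : u.1 = id := by
      funext x
      show u.1 x = x
      have hfix : u.1 (u.1 x) = u.1 x := congrFun h1 x
      refine (hdistal x (u.1 x) fun ε hε => ?_).symm
      set O := ((fun q : (X → X) × (Y → Y) => q.1 x) ⁻¹' Metric.ball (u.1 x) (ε/2)) ∩
          ((fun q : (X → X) × (Y → Y) => q.1 (u.1 x)) ⁻¹' Metric.ball (u.1 x) (ε/2)) with hO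
      have hOopen : IsOpen O :=
        (Metric.isOpen_ball.preimage ((continuous_apply x).comp continuous_fst)).inter
          (Metric.isOpen_ball.preimage ((continuous_apply (u.1 x)).comp continuous_fst))
      have huO : u ∈ O := by
        constructor
        · show dist (u.1 x) (u.1 x) < ε/2
          rw [dist_self]; positivity
        · show dist (u.1 (u.1 x)) (u.1 x) < ε/2
          rw [hfix, dist_self]; positivity
      obtain ⟨q, hqO, ⟨n, rfl⟩⟩ := mem_closure_iff.mp hu O hOopen huO
      have e1 : dist (iterZ T n x) (u.1 x) < ε/2 := hqO.1
      have e2 : dist (iterZ T n (u.1 x)) (u.1 x) < ε/2 := hqO.2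
      refine ⟨n, lt_of_le_of_lt (dist_triangle _ (u.1 x) _) ?_⟩
      rw [dist_comm (u.1 x) (iterZ T n (u.1 x))]
      linarith
    refine ⟨hu1, funext fun y => ?_⟩
    obtain ⟨x, rfl⟩ := hsurj y
    have := hC u hu x
    rw [hu1] at this
    exact this.symm
  -- every element of F has a two-sided inverse in F
  have hleft : ∀ q ∈ F, ∃ a ∈ F, a.1 ∘ q.1 = id ∧ a.2 ∘ q.2 = id := by
    intro q hq
    set Ψ : (X → X) × (Y → Y) → (X → X) × (Y → Y) := fun a => (a.1 ∘ q.1, a.2 ∘ q.2) with hΨ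
    have hΨcont : Continuous Ψ := by
      refine Continuous.prodMk ?_ ?_
      · exact continuous_pi fun x => (continuous_apply (q.1 x)).comp continuous_fst
      · exact continuous_pi fun y => (continuous_apply (q.2 y)).comp continuous_snd
    set A : Set ((X → X) × (Y → Y)) := Ψ '' F with hA
    have hAsub : A ⊆ F := by
      rintro _ ⟨a, ha, rfl⟩
      exact hmulF a ha q hq
    have hAmul : ∀ w ∈ A, ∀ v ∈ A, ((w.1 ∘ v.1, w.2 ∘ v.2) : (X → X) × (Y → Y)) ∈ A := by
      rintro _ ⟨a, ha, rfl⟩ _ ⟨b, hb, rfl⟩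
      exact ⟨((a.1 ∘ q.1) ∘ b.1, (a.2 ∘ q.2) ∘ b.2),
        hmulF _ (hmulF a ha q hq) b hb, rfl⟩
    obtain ⟨w, hwA, hw1, _⟩ := exists_idem_pair A (hFcompact.image hΨcont)
      ⟨Ψ q, ⟨q, hq, rfl⟩⟩ hAmul
    obtain ⟨hid1, hid2⟩ := hidem w (hAsub hwA) hw1
    obtain ⟨a, ha, haeq⟩ := hwA
    refine ⟨a, ha, ?_, ?_⟩
    · have := congrArg Prod.fst haeq; rw [hid1] at this; exact this
    · have := congrArg Prod.snd haeq; rw [hid2] at this; exact this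
  have hinv : ∀ q ∈ F, ∃ r ∈ F, q.1 ∘ r.1 = id ∧ r.1 ∘ q.1 = id ∧
      q.2 ∘ r.2 = id ∧ r.2 ∘ q.2 = id := by
    intro q hq
    obtain ⟨a, ha, ha1, ha2⟩ := hleft q hq
    obtain ⟨b, hb, hb1, hb2⟩ := hleft a ha
    have hq1 : q.1 = b.1 := by
      calc q.1 = (b.1 ∘ a.1) ∘ q.1 := by rw [hb1]; rfl
      _ = b.1 ∘ (a.1 ∘ q.1) := rfl
      _ = b.1 := by rw [ha1]; rfl
    have hq2 : q.2 = b.2 := by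
      calc q.2 = (b.2 ∘ a.2) ∘ q.2 := by rw [hb2]; rfl
      _ = b.2 ∘ (a.2 ∘ q.2) := rfl
      _ = b.2 := by rw [ha2]; rfl
    exact ⟨a, ha, by rw [hq1]; exact hb1, ha1, by rw [hq2]; exact hb2, ha2⟩
  -- minimality: the F-orbit of any point of Y is everything
  have hmin : ∀ y0 y' : Y, ∃ q ∈ F, q.2 y0 = y' := by
    intro y0 y'
    set K : Set Y := (fun q : (X → X) × (Y → Y) => q.2 y0) '' F with hK
    have hKcompact : IsCompact K :=
      hFcompact.image ((continuous_apply y0).comp continuous_snd)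
    have hrange : Set.range (fun n : ℤ => iterZ S n y0) ⊆ K := by
      rintro _ ⟨n, rfl⟩
      exact ⟨Θ n, subset_closure ⟨n, rfl⟩, rfl⟩
    have : (Set.univ : Set Y) ⊆ K := by
      rw [← (hY y0).closure_eq]
      exact closure_minimal hrange hKcompact.isClosed
    obtain ⟨q, hq, hq2⟩ := this (Set.mem_univ y')
    exact ⟨q, hq, hq2⟩
  -- final argument
  intro U hU
  rw [isOpen_iff_mem_nhds]
  rintro y ⟨x0, hx0U, rfl⟩
  by_contra hny
  have hex : ∀ k : ℕ, ∃ y, dist y (p x0) < 1/(k+1) ∧ y ∉ p '' U := by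
    intro k
    by_contra hc
    push_neg at hc
    apply hny
    rw [Metric.mem_nhds_iff]
    refine ⟨1/(k+1), by positivity, fun y hy => hc y (by rwa [Metric.mem_ball] at hy)⟩
  choose ySeq hy1 hy2 using hex
  have hylim : Tendsto ySeq atTop (𝓝 (p x0)) := by
    rw [tendsto_iff_dist_tendsto_zero]
    exact squeeze_zero (fun k => dist_nonneg) (fun k => (hy1 k).le)
      tendsto_one_div_add_atTop_nhds_zero_nat
  choose gh hghF hgh2 using fun k => hmin (p x0) (ySeq k)
  set 𝒰 : Ultrafilter ℕ := Ultrafilter.of atTop with hU𝒰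
  have hle : (𝒰 : Filter ℕ) ≤ atTop := Ultrafilter.of_le _
  obtain ⟨q, hqF, hqle⟩ := hFcompact.ultrafilter_le_nhds (𝒰.map gh)
    (by rw [Ultrafilter.coe_map, le_principal_iff]
        exact Filter.mem_map.mpr (Filter.univ_mem' fun k => hghF k))
  have hq : Tendsto gh (𝒰 : Filter ℕ) (𝓝 q) := by
    rwa [Ultrafilter.coe_map] at hqle
  have hq2y0 : q.2 (p x0) = p x0 := by
    have h1 : Tendsto (fun k => (gh k).2 (p x0)) (𝒰 : Filter ℕ) (𝓝 (q.2 (p x0))) :=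
      (((continuous_apply (p x0)).comp continuous_snd).tendsto q).comp hq
    have h2 : Tendsto (fun k => (gh k).2 (p x0)) (𝒰 : Filter ℕ) (𝓝 (p x0)) := by
      have : (fun k => (gh k).2 (p x0)) = ySeq := funext hgh2
      rw [this]
      exact hylim.mono_left hle
    exact tendsto_nhds_unique h1 h2
  obtain ⟨r, hrF, hqr1, _, _, hrq2⟩ := hinv q hqF
  have hr2 : p (r.1 x0) = p x0 := by
    have h1 := hC r hrF x0
    have h2 : r.2 (p x0) = p x0 := by
      conv_lhs => rw [← hq2y0]
      exact congrFun hrq2 (p x0)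
    rw [h1, h2]
  have hlim : Tendsto (fun k => (gh k).1 (r.1 x0)) (𝒰 : Filter ℕ) (𝓝 x0) := by
    have h1 : Tendsto (fun k => (gh k).1 (r.1 x0)) (𝒰 : Filter ℕ) (𝓝 (q.1 (r.1 x0))) :=
      (((continuous_apply (r.1 x0)).comp continuous_fst).tendsto q).comp hq
    have h2 : q.1 (r.1 x0) = x0 := congrFun hqr1 x0
    rwa [h2] at h1
  have hmem : {k | (gh k).1 (r.1 x0) ∈ U} ∈ 𝒰 := hlim (hU.mem_nhds hx0U)
  obtain ⟨k, hk⟩ := Ultrafilter.nonempty_of_mem hmem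
  refine hy2 k ⟨(gh k).1 (r.1 x0), hk, ?_⟩
  rw [hC (gh k) (hghF k) (r.1 x0), hr2, hgh2 k]
end

section
/- Let (X,T) be a distal minimal topological dynamical system. Then the ℤ³-system (𝒫; T^[2], T^[2]_1, T^[2]_2) and the ℤ⁴-system (𝒬; T^[3], T^[3]_1, T^[3]_2, T^[3]_3) are distal and minimal. -/
set_option linter.unusedSectionVars false

open Filter Topology

section Acts

variable {X : Type*} [TopologicalSpace X]

/-- The `ℤ³`-action on `X⁴` generated by the commuting homeomorphisms
`T^[2] = T×T×T×T`, `T^[2]₁ = id×id×T×T` and `T^[2]₂ = id×T×id×T`: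
`act2 T a b c = (T^[2])^a ∘ (T^[2]₁)^b ∘ (T^[2]₂)^c`. -/
def act2 (T : X ≃ₜ X) (a b c : ℤ) (q : X × X × X × X) : X × X × X × X :=
  (iterZ T a q.1, iterZ T (a + c) q.2.1,
   iterZ T (a + b) q.2.2.1, iterZ T (a + b + c) q.2.2.2)

/-- The `ℤ⁴`-action on `X⁸ = X⁴ × X⁴` generated by the commuting homeomorphisms
`T^[3]`, `T^[3]₁`, `T^[3]₂`, `T^[3]₃`:
`act3 T a b c d = (T^[3])^a ∘ (T^[3]₁)^b ∘ (T^[3]₂)^c ∘ (T^[3]₃)^d`. -/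
def act3 (T : X ≃ₜ X) (a b c d : ℤ)
    (q : (X × X × X × X) × (X × X × X × X)) :
    (X × X × X × X) × (X × X × X × X) :=
  (act2 T a c d q.1, act2 T (a + b) c d q.2)

end Acts

/-! ### Auxiliary lemmas -/

section Aux

variable {X : Type*} [TopologicalSpace X]

lemma iterZ_iterZ (T : X ≃ₜ X) (m n : ℤ) (x : X) :
    iterZ T m (iterZ T n x) = iterZ T (m + n) x := by
  simp [iterZ, zpow_add, Equiv.Perm.mul_apply]

lemma iterZ_congr (T : X ≃ₜ X) {m n : ℤ} (h : m = n) (x : X) :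
    iterZ T m x = iterZ T n x := by rw [h]

lemma iterZ_cont (T : X ≃ₜ X) (n : ℤ) : Continuous (iterZ T n) := by
  induction n using Int.induction_on with
  | zero => convert continuous_id using 1; funext x; simp [iterZ]
  | succ k ih =>
      have h : iterZ T ((k : ℤ) + 1) = iterZ T k ∘ ⇑T := by
        funext x
        rw [← iterZ_iterZ]
        simp [iterZ, Function.comp]
      exact h ▸ ih.comp T.continuous
  | pred k ih =>
      have h : iterZ T (-(k : ℤ) - 1) = iterZ T (-k) ∘ ⇑T.symm := by
        funext x
        rw [show (-(k:ℤ) - 1) = (-k) + (-1) by ring, ← iterZ_iterZ]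
        simp [iterZ, Function.comp, zpow_neg, zpow_one, Equiv.Perm.inv_def]
      exact h ▸ ih.comp T.symm.continuous

lemma act2_cont (T : X ≃ₜ X) (a b c : ℤ) : Continuous (act2 T a b c) := by
  unfold act2
  exact ((iterZ_cont T a).comp continuous_fst).prodMk
    (((iterZ_cont T _).comp (continuous_fst.comp continuous_snd)).prodMk
      (((iterZ_cont T _).comp (continuous_fst.comp (continuous_snd.comp continuous_snd))).prodMk
        ((iterZ_cont T _).comp (continuous_snd.comp (continuous_snd.comp continuous_snd)))))

lemma act3_cont (T : X ≃ₜ X) (a b c d : ℤ) : Continuous (act3 T a b c d) := by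
  unfold act3
  exact ((act2_cont T a c d).comp continuous_fst).prodMk
    ((act2_cont T (a+b) c d).comp continuous_snd)

lemma act2_congr (T : X ≃ₜ X) {a a' b b' c c' : ℤ} (h1 : a = a') (h2 : b = b')
    (h3 : c = c') (q : X × X × X × X) : act2 T a b c q = act2 T a' b' c' q := by
  rw [h1, h2, h3]

lemma act2_comp (T : X ≃ₜ X) (a b c a' b' c' : ℤ) (q : X × X × X × X) :
    act2 T a b c (act2 T a' b' c' q) = act2 T (a + a') (b + b') (c + c') q := by
  simp only [act2, iterZ_iterZ, Prod.mk.injEq]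
  repeat' constructor
  all_goals exact iterZ_congr T (by ring) _

lemma act3_comp (T : X ≃ₜ X) (a b c d a' b' c' d' : ℤ)
    (q : (X × X × X × X) × (X × X × X × X)) :
    act3 T a b c d (act3 T a' b' c' d' q)
      = act3 T (a + a') (b + b') (c + c') (d + d') q := by
  simp only [act3, act2_comp, Prod.mk.injEq]
  repeat' constructor
  all_goals exact act2_congr T (by ring) (by ring) (by ring) _

end Aux

section Ellis

variable {W : Type*} [MetricSpace W] [CompactSpace W]

lemma ellis_key (M : Set (W → W)) (hne : M.Nonempty)
    (hcont : ∀ f ∈ M, Continuous f)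
    (hcomp : ∀ f ∈ M, ∀ g ∈ M, f ∘ g ∈ M)
    (hdist : ∀ x y : W, x ≠ y → ∃ ε > 0, ∀ f ∈ M, ε ≤ dist (f x) (f y))
    {p q : W} (hq : q ∈ closure ((fun f => f p) '' M)) :
    p ∈ closure ((fun f => f q) '' M) := by
  classical
  set E : Set (W → W) := closure M with hE
  have hcompE : IsCompact E := isClosed_closure.isCompact
  have hME : M ⊆ E := subset_closure
  have hcr : ∀ f : W → W, Continuous (fun h : W → W => h ∘ f) := fun f =>
    continuous_pi fun x => continuous_apply (f x)
  have hstepA : ∀ γ ∈ M, ∀ h ∈ E, γ ∘ h ∈ E := by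
    intro γ hγ h hh
    have hc : Continuous (fun h : W → W => γ ∘ h) :=
      continuous_pi fun x => (hcont γ hγ).comp (continuous_apply x)
    have h1 : γ ∘ h ∈ closure ((fun h : W → W => γ ∘ h) '' M) :=
      image_closure_subset_closure_image hc ⟨h, hh, rfl⟩
    refine closure_mono ?_ h1
    rintro _ ⟨g, hg, rfl⟩
    exact hcomp γ hγ g hg
  have hEE : ∀ g ∈ E, ∀ h ∈ E, g ∘ h ∈ E := by
    intro g hg h hh
    have hcl : IsClosed {g : W → W | g ∘ h ∈ E} := isClosed_closure.preimage (hcr h)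
    exact closure_minimal (fun γ hγ => hstepA γ hγ h hh) hcl hg
  have hqE : q ∈ (fun f : W → W => f p) '' E := by
    have hc : IsCompact ((fun f : W → W => f p) '' E) := hcompE.image (continuous_apply p)
    exact closure_minimal (Set.image_mono hME) hc.isClosed hq
  obtain ⟨f, hf, hfp⟩ := hqE
  letI : TopologicalSpace (Function.End W) := (inferInstance : TopologicalSpace (W → W))
  haveI : T2Space (Function.End W) := (inferInstance : T2Space (W → W))
  have hmul : ∀ r : Function.End W, Continuous (· * r) := fun r => hcr r
  have hidem := exists_idempotent_in_compact_subsemigroup hmul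
      ((fun h : W → W => h ∘ f) '' E : Set (Function.End W))
      ⟨hne.choose ∘ f, ⟨hne.choose, hME hne.choose_spec, rfl⟩⟩
      (hcompE.image (hcr f))
      (by
        rintro _ ⟨g1, hg1, rfl⟩ _ ⟨g2, hg2, rfl⟩
        exact ⟨g1 ∘ (f ∘ g2), hEE g1 hg1 _ (hEE f hf g2 hg2), rfl⟩)
  obtain ⟨u, hu, huu⟩ := hidem
  obtain ⟨g, hgE, rfl⟩ := hu
  have huE : (g ∘ f : W → W) ∈ E := hEE g hgE f hf
  have hupp : (g ∘ f) ((g ∘ f) p) = (g ∘ f) p := congrFun huu p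
  have hup : (g ∘ f) p = p := by
    by_contra hne'
    obtain ⟨ε, hε, hb⟩ := hdist ((g ∘ f) p) p hne'
    set w := (g ∘ f) p with hw
    have hVopen : IsOpen {h : W → W | dist (h w) w < ε/2 ∧ dist (h p) w < ε/2} := by
      refine IsOpen.inter ?_ ?_
      · exact isOpen_Iio.preimage ((continuous_apply w).dist continuous_const)
      · exact isOpen_Iio.preimage ((continuous_apply p).dist continuous_const)
    have huV : (g ∘ f : W → W) ∈ {h : W → W | dist (h w) w < ε/2 ∧ dist (h p) w < ε/2} := by
      constructor
      · rw [show (g ∘ f) w = w from hupp, dist_self]; positivity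
      · rw [← hw, dist_self]; positivity
    obtain ⟨m, hmV, hmM⟩ := _root_.mem_closure_iff.mp huE _ hVopen huV
    have h1 := hb m hmM
    have h2 : dist (m w) (m p) ≤ dist (m w) w + dist (m p) w := dist_triangle_right _ _ _
    linarith [hmV.1, hmV.2]
  have hpg : p = g q := by rw [← hfp]; exact hup.symm
  rw [hpg]
  exact image_closure_subset_closure_image (continuous_apply q) ⟨g, hgE, rfl⟩

lemma min_from_trans {I : Type*} [Nonempty I]
    (ρ : I → W → W)
    (hcont : ∀ i, Continuous (ρ i))
    (hcomp : ∀ i j, ∃ k, ρ i ∘ ρ j = ρ k)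
    (hdist : ∀ x y : W, x ≠ y → ∃ ε > 0, ∀ i, ε ≤ dist (ρ i x) (ρ i y))
    (P : Set W) (Δ : W) (hP : P ⊆ closure (Set.range fun i => ρ i Δ))
    {q : W} (hq : q ∈ P) : P ⊆ closure (Set.range fun i => ρ i q) := by
  have hrange : ∀ z : W, (fun f : W → W => f z) '' Set.range ρ
      = Set.range fun i => ρ i z := by
    intro z; ext w; constructor
    · rintro ⟨_, ⟨i, rfl⟩, rfl⟩; exact ⟨i, rfl⟩
    · rintro ⟨i, rfl⟩; exact ⟨ρ i, ⟨i, rfl⟩, rfl⟩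
  have hM : ∀ f ∈ Set.range ρ, ∀ g ∈ Set.range ρ, f ∘ g ∈ Set.range ρ := by
    rintro _ ⟨i, rfl⟩ _ ⟨j, rfl⟩
    obtain ⟨k, hk⟩ := hcomp i j
    exact ⟨k, hk.symm⟩
  have key : Δ ∈ closure (Set.range fun i => ρ i q) := by
    have hq' : q ∈ closure ((fun f : W → W => f Δ) '' Set.range ρ) := by
      rw [hrange]; exact hP hq
    have h := ellis_key (Set.range ρ) ⟨ρ (Classical.arbitrary I), Set.mem_range_self _⟩
      (by rintro _ ⟨i, rfl⟩; exact hcont i) hM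
      (by
        intro x y h
        obtain ⟨ε, hε, hb⟩ := hdist x y h
        exact ⟨ε, hε, by rintro _ ⟨i, rfl⟩; exact hb i⟩) hq'
    rwa [hrange] at h
  intro z hz
  have h1 : closure (Set.range fun i => ρ i Δ) ⊆ closure (Set.range fun i => ρ i q) := by
    refine closure_minimal ?_ isClosed_closure
    rintro _ ⟨i, rfl⟩
    refine map_mem_closure (hcont i) key ?_
    rintro _ ⟨j, rfl⟩
    obtain ⟨k, hk⟩ := hcomp i j
    exact ⟨k, (congrFun hk q).symm⟩
  exact h1 (hP hz)

end Ellis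

section DistHelp

variable {α β : Type*} [PseudoMetricSpace α] [PseudoMetricSpace β]

lemma dist_fst_le' (p q : α × β) : dist p.1 q.1 ≤ dist p q := by
  rw [Prod.dist_eq]; exact le_max_left _ _

lemma dist_snd_le' (p q : α × β) : dist p.2 q.2 ≤ dist p q := by
  rw [Prod.dist_eq]; exact le_max_right _ _

end DistHelp

section Main

variable {X : Type*} [MetricSpace X] [CompactSpace X]

lemma distal_pt (T : X ≃ₜ X) (hdistal : IsDistal T) {x y : X} (h : x ≠ y) :
    ∃ ε > 0, ∀ e : ℤ, ε ≤ dist (iterZ T e x) (iterZ T e y) := by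
  refine ⟨_, hdistal x y h, fun e => ciInf_le ⟨0, ?_⟩ e⟩
  rintro _ ⟨n, rfl⟩; exact dist_nonneg

lemma para_distal (T : X ≃ₜ X) (hdistal : IsDistal T)
    (q q' : X × X × X × X) (h : q ≠ q') :
    ∃ ε > 0, ∀ v : ℤ × ℤ × ℤ,
      ε ≤ dist (act2 T v.1 v.2.1 v.2.2 q) (act2 T v.1 v.2.1 v.2.2 q') := by
  have d1 : ∀ u v : X × X × X × X, dist u.1 v.1 ≤ dist u v := fun u v => dist_fst_le' u v
  have d2 : ∀ u v : X × X × X × X, dist u.2.1 v.2.1 ≤ dist u v := fun u v =>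
    (dist_fst_le' u.2 v.2).trans (dist_snd_le' u v)
  have d3 : ∀ u v : X × X × X × X, dist u.2.2.1 v.2.2.1 ≤ dist u v := fun u v =>
    ((dist_fst_le' u.2.2 v.2.2).trans (dist_snd_le' u.2 v.2)).trans (dist_snd_le' u v)
  have d4 : ∀ u v : X × X × X × X, dist u.2.2.2 v.2.2.2 ≤ dist u v := fun u v =>
    ((dist_snd_le' u.2.2 v.2.2).trans (dist_snd_le' u.2 v.2)).trans (dist_snd_le' u v)
  have hcase : q.1 ≠ q'.1 ∨ q.2.1 ≠ q'.2.1 ∨ q.2.2.1 ≠ q'.2.2.1 ∨ q.2.2.2 ≠ q'.2.2.2 := by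
    by_contra hc; push_neg at hc
    exact h (Prod.ext hc.1 (Prod.ext hc.2.1 (Prod.ext hc.2.2.1 hc.2.2.2)))
  rcases hcase with hc | hc | hc | hc
  · obtain ⟨ε, hε, hb⟩ := distal_pt T hdistal hc
    exact ⟨ε, hε, fun v => (hb v.1).trans (d1 (act2 T v.1 v.2.1 v.2.2 q) (act2 T v.1 v.2.1 v.2.2 q'))⟩
  · obtain ⟨ε, hε, hb⟩ := distal_pt T hdistal hc
    exact ⟨ε, hε, fun v => (hb (v.1 + v.2.2)).trans (d2 (act2 T v.1 v.2.1 v.2.2 q) (act2 T v.1 v.2.1 v.2.2 q'))⟩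
  · obtain ⟨ε, hε, hb⟩ := distal_pt T hdistal hc
    exact ⟨ε, hε, fun v => (hb (v.1 + v.2.1)).trans (d3 (act2 T v.1 v.2.1 v.2.2 q) (act2 T v.1 v.2.1 v.2.2 q'))⟩
  · obtain ⟨ε, hε, hb⟩ := distal_pt T hdistal hc
    exact ⟨ε, hε, fun v => (hb (v.1 + v.2.1 + v.2.2)).trans (d4 (act2 T v.1 v.2.1 v.2.2 q) (act2 T v.1 v.2.1 v.2.2 q'))⟩

lemma pip_distal (T : X ≃ₜ X) (hdistal : IsDistal T)
    (q q' : (X × X × X × X) × (X × X × X × X)) (h : q ≠ q') :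
    ∃ ε > 0, ∀ v : ℤ × ℤ × ℤ × ℤ,
      ε ≤ dist (act3 T v.1 v.2.1 v.2.2.1 v.2.2.2 q)
            (act3 T v.1 v.2.1 v.2.2.1 v.2.2.2 q') := by
  have hcase : q.1 ≠ q'.1 ∨ q.2 ≠ q'.2 := by
    by_contra hc; push_neg at hc
    exact h (Prod.ext hc.1 hc.2)
  rcases hcase with hc | hc
  · obtain ⟨ε, hε, hb⟩ := para_distal T hdistal q.1 q'.1 hc
    refine ⟨ε, hε, fun v => ?_⟩
    exact (hb (v.1, v.2.2.1, v.2.2.2)).trans (dist_fst_le' (act3 T v.1 v.2.1 v.2.2.1 v.2.2.2 q) (act3 T v.1 v.2.1 v.2.2.1 v.2.2.2 q'))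
  · obtain ⟨ε, hε, hb⟩ := para_distal T hdistal q.2 q'.2 hc
    refine ⟨ε, hε, fun v => ?_⟩
    exact (hb (v.1 + v.2.1, v.2.2.1, v.2.2.2)).trans (dist_snd_le' (act3 T v.1 v.2.1 v.2.2.1 v.2.2.2 q) (act3 T v.1 v.2.1 v.2.2.1 v.2.2.2 q'))

lemma act2_mem_para (T : X ≃ₜ X) (a b c : ℤ) {q : X × X × X × X}
    (hq : q ∈ Para T) : act2 T a b c q ∈ Para T := by
  refine map_mem_closure (act2_cont T a b c) hq ?_
  rintro _ ⟨x, m, n, rfl⟩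
  refine ⟨iterZ T a x, c + m, b + n, ?_⟩
  simp only [act2, iterZ_iterZ, Prod.mk.injEq]
  repeat' constructor
  all_goals exact iterZ_congr T (by ring) _

lemma act3_mem_pip (T : X ≃ₜ X) (a b c d : ℤ)
    {q : (X × X × X × X) × (X × X × X × X)}
    (hq : q ∈ Pip T) : act3 T a b c d q ∈ Pip T := by
  refine map_mem_closure (act3_cont T a b c d) hq ?_
  rintro _ ⟨x, m, n, p, rfl⟩
  refine ⟨iterZ T a x, m + d, n + c, p + b, ?_⟩
  simp only [act3, act2, iterZ_iterZ, Prod.mk.injEq]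
  repeat' constructor
  all_goals exact iterZ_congr T (by ring) _

lemma para_subset_orbit (T : X ≃ₜ X) (hmin : IsMinimal T) (x₀ : X) :
    Para T ⊆ closure (Set.range fun v : ℤ × ℤ × ℤ =>
      act2 T v.1 v.2.1 v.2.2 (x₀, x₀, x₀, x₀)) := by
  refine closure_minimal ?_ isClosed_closure
  rintro _ ⟨y, m, n, rfl⟩
  have hFc : Continuous fun z : X =>
      (z, iterZ T m z, iterZ T n z, iterZ T (m + n) z) :=
    continuous_id.prodMk ((iterZ_cont T m).prodMk
      ((iterZ_cont T n).prodMk (iterZ_cont T (m + n))))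
  refine map_mem_closure
    (f := fun z : X => (z, iterZ T m z, iterZ T n z, iterZ T (m + n) z))
    hFc (hmin x₀ y) ?_
  rintro _ ⟨a, rfl⟩
  refine ⟨(a, n, m), ?_⟩
  simp only [act2, iterZ_iterZ, Prod.mk.injEq]
  repeat' constructor
  all_goals exact iterZ_congr T (by ring) _

lemma pip_subset_orbit (T : X ≃ₜ X) (hmin : IsMinimal T) (x₀ : X) :
    Pip T ⊆ closure (Set.range fun v : ℤ × ℤ × ℤ × ℤ =>
      act3 T v.1 v.2.1 v.2.2.1 v.2.2.2 ((x₀, x₀, x₀, x₀), (x₀, x₀, x₀, x₀))) := by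
  refine closure_minimal ?_ isClosed_closure
  rintro _ ⟨y, m, n, p, rfl⟩
  have hFc : Continuous fun z : X =>
      ((z, iterZ T m z, iterZ T n z, iterZ T (m + n) z),
       (iterZ T p z, iterZ T (m + p) z, iterZ T (n + p) z, iterZ T (m + n + p) z)) := by
    refine Continuous.prodMk ?_ ?_
    · exact continuous_id.prodMk ((iterZ_cont T m).prodMk
        ((iterZ_cont T n).prodMk (iterZ_cont T (m + n))))
    · exact (iterZ_cont T p).prodMk ((iterZ_cont T (m + p)).prodMk
        ((iterZ_cont T (n + p)).prodMk (iterZ_cont T (m + n + p))))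
  refine map_mem_closure
    (f := fun z : X =>
      ((z, iterZ T m z, iterZ T n z, iterZ T (m + n) z),
       (iterZ T p z, iterZ T (m + p) z, iterZ T (n + p) z, iterZ T (m + n + p) z)))
    hFc (hmin x₀ y) ?_
  rintro _ ⟨a, rfl⟩
  refine ⟨(a, p, n, m), ?_⟩
  simp only [act3, act2, iterZ_iterZ, Prod.mk.injEq]
  repeat' constructor
  all_goals exact iterZ_congr T (by ring) _

end Main

/-- For a distal minimal system, the systems `(𝒫; T^[2], T^[2]₁, T^[2]₂)` and
`(𝒬; T^[3], T^[3]₁, T^[3]₂, T^[3]₃)` are distal and minimal. -/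
theorem stmt9 {X : Type*} [MetricSpace X] [CompactSpace X] [Nonempty X]
    (T : X ≃ₜ X) (hdistal : IsDistal T) (hmin : IsMinimal T) :
    ((∀ (a b c : ℤ) (q : X × X × X × X), q ∈ Para T → act2 T a b c q ∈ Para T) ∧
     (∀ q q' : X × X × X × X, q ∈ Para T → q' ∈ Para T → q ≠ q' →
        0 < ⨅ v : ℤ × ℤ × ℤ,
          dist (act2 T v.1 v.2.1 v.2.2 q) (act2 T v.1 v.2.1 v.2.2 q')) ∧
     (∀ q ∈ Para T, Para T ⊆
        closure (Set.range fun v : ℤ × ℤ × ℤ => act2 T v.1 v.2.1 v.2.2 q))) ∧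
    ((∀ (a b c d : ℤ) (q : (X × X × X × X) × (X × X × X × X)),
        q ∈ Pip T → act3 T a b c d q ∈ Pip T) ∧
     (∀ q q' : (X × X × X × X) × (X × X × X × X),
        q ∈ Pip T → q' ∈ Pip T → q ≠ q' →
        0 < ⨅ v : ℤ × ℤ × ℤ × ℤ,
          dist (act3 T v.1 v.2.1 v.2.2.1 v.2.2.2 q)
               (act3 T v.1 v.2.1 v.2.2.1 v.2.2.2 q')) ∧
     (∀ q ∈ Pip T, Pip T ⊆
        closure (Set.range fun v : ℤ × ℤ × ℤ × ℤ =>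
          act3 T v.1 v.2.1 v.2.2.1 v.2.2.2 q))) := by
  obtain ⟨x₀⟩ := (inferInstance : Nonempty X)
  refine ⟨⟨fun a b c q hq => act2_mem_para T a b c hq, ?_, ?_⟩,
    ⟨fun a b c d q hq => act3_mem_pip T a b c d hq, ?_, ?_⟩⟩
  · intro q q' _ _ hne
    obtain ⟨ε, hε, hb⟩ := para_distal T hdistal q q' hne
    exact lt_of_lt_of_le hε (le_ciInf hb)
  · intro q hq
    exact min_from_trans (fun v : ℤ × ℤ × ℤ => act2 T v.1 v.2.1 v.2.2)
      (fun v => act2_cont T _ _ _)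
      (fun i j => ⟨(i.1 + j.1, i.2.1 + j.2.1, i.2.2 + j.2.2),
        funext fun q => act2_comp T i.1 i.2.1 i.2.2 j.1 j.2.1 j.2.2 q⟩)
      (fun x y h => para_distal T hdistal x y h)
      (Para T) (x₀, x₀, x₀, x₀) (para_subset_orbit T hmin x₀) hq
  · intro q q' _ _ hne
    obtain ⟨ε, hε, hb⟩ := pip_distal T hdistal q q' hne
    exact lt_of_lt_of_le hε (le_ciInf hb)
  · intro q hq
    exact min_from_trans (fun v : ℤ × ℤ × ℤ × ℤ => act3 T v.1 v.2.1 v.2.2.1 v.2.2.2)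
      (fun v => act3_cont T _ _ _ _)
      (fun i j => ⟨(i.1 + j.1, i.2.1 + j.2.1, i.2.2.1 + j.2.2.1, i.2.2.2 + j.2.2.2),
        funext fun q => act3_comp T i.1 i.2.1 i.2.2.1 i.2.2.2 j.1 j.2.1 j.2.2.1 j.2.2.2 q⟩)
      (fun x y h => pip_distal T hdistal x y h)
      (Pip T) ((x₀, x₀, x₀, x₀), (x₀, x₀, x₀, x₀)) (pip_subset_orbit T hmin x₀) hq
end
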